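/- Closed-form solution of the HJB Hamiltonian minimization: fix a state x ∈ ℕ^d, nonnegative propensity values a_1(x),…,a_J(x), a positive real u > 0, and positive reals u_1,…,u_J > 0 (representing the value function at the shifted states). Consider the function H(δ) := (−2·Σ_{j=1}^J a_j(x) + Σ_{j=1}^J δ_j)·u + Σ_{j=1}^J (a_j(x)²/δ_j)·u_j on the admissible set A_x, where for indices j with a_j(x) = 0 (so δ_j = 0) the term a_j(x)²/δ_j·u_j is taken to be 0. Then the infimum of H over A_x equals 2·Σ_{j=1}^J a_j(x)·(√(u·u_j) − u), and it is attained at the control δ̃ with δ̃_j = a_j(x)·√(u_j/u) for every j. -/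

import Mathlib

noncomputable section

open scoped BigOperators
open Real

lemma term_eq (a u w : ℝ) (ha : 0 ≤ a) (hu : 0 < u) (hw : 0 < w) :
    a * Real.sqrt (w / u) * u + a ^ 2 / (a * Real.sqrt (w / u)) * w
      = 2 * (a * Real.sqrt (u * w)) := by
  rcases eq_or_lt_of_le ha with h | h
  · simp [← h]
  · have hsu : Real.sqrt u > 0 := Real.sqrt_pos.2 hu
    have hsw : Real.sqrt w > 0 := Real.sqrt_pos.2 hw
    rw [Real.sqrt_div' w, Real.sqrt_mul hu.le] <;> try positivity
    have h1 : Real.sqrt u ^ 2 = u := Real.sq_sqrt hu.le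
    have h2 : Real.sqrt w ^ 2 = w := Real.sq_sqrt hw.le
    field_simp
    ring_nf
    rw [h1, h2]
    ring

lemma term_ge (a u w δ : ℝ) (ha : 0 ≤ a) (hu : 0 < u) (hw : 0 < w)
    (h0 : a = 0 → δ = 0) (h1 : a ≠ 0 → 0 < δ) :
    2 * (a * Real.sqrt (u * w)) ≤ δ * u + a ^ 2 / δ * w := by
  rcases eq_or_lt_of_le ha with h | h
  · simp [h0 h.symm, ← h]
  · have hδ : 0 < δ := h1 h.ne'
    have key : 2 * Real.sqrt (δ * u) * Real.sqrt (a ^ 2 / δ * w)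
        ≤ δ * u + a ^ 2 / δ * w := by
      nlinarith [two_mul_le_add_sq (Real.sqrt (δ * u)) (Real.sqrt (a ^ 2 / δ * w)),
        Real.sq_sqrt (by positivity : (0:ℝ) ≤ δ * u),
        Real.sq_sqrt (by positivity : (0:ℝ) ≤ a ^ 2 / δ * w)]
    have hprod : Real.sqrt (δ * u) * Real.sqrt (a ^ 2 / δ * w)
        = a * Real.sqrt (u * w) := by
      rw [← Real.sqrt_mul (by positivity)]
      have : δ * u * (a ^ 2 / δ * w) = a ^ 2 * (u * w) := by field_simp
      rw [this, Real.sqrt_mul (by positivity), Real.sqrt_sq h.le]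
    rw [← hprod]; linarith [key]

/-- Admissible control set at state `x`: `δ_j = 0` exactly when `a_j(x) = 0`, and
`δ_j > 0` otherwise. -/
def Adm {d J : ℕ} (a : Fin J → (Fin d → ℕ) → ℝ) (x : Fin d → ℕ) (δ : Fin J → ℝ) : Prop :=
  ∀ j, (a j x = 0 → δ j = 0) ∧ (a j x ≠ 0 → 0 < δ j)

/-- The HJB Hamiltonian term
`H(δ) = (−2 ∑_j a_j(x) + ∑_j δ_j)·u + ∑_j (a_j(x)²/δ_j)·u_j`.
For indices `j` with `a_j(x) = 0` (hence `δ_j = 0` on the admissible set) the term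
`a_j(x)²/δ_j · u_j` is `0` (Lean's convention `0/0 = 0` realizes this). -/
def Hfun {d J : ℕ} (a : Fin J → (Fin d → ℕ) → ℝ) (x : Fin d → ℕ)
    (u : ℝ) (w : Fin J → ℝ) (δ : Fin J → ℝ) : ℝ :=
  (-2 * ∑ j, a j x + ∑ j, δ j) * u + ∑ j, (a j x) ^ 2 / δ j * w j

lemma Hfun_eq {d J : ℕ} (a : Fin J → (Fin d → ℕ) → ℝ) (x : Fin d → ℕ)
    (u : ℝ) (w : Fin J → ℝ) (δ : Fin J → ℝ) :
    Hfun a x u w δ = (∑ j, (δ j * u + (a j x) ^ 2 / δ j * w j)) - 2 * u * ∑ j, a j x := by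
  simp [Hfun, Finset.sum_add_distrib, ← Finset.sum_mul]; ring

lemma target_eq {d J : ℕ} (a : Fin J → (Fin d → ℕ) → ℝ) (x : Fin d → ℕ)
    (u : ℝ) (w : Fin J → ℝ) :
    2 * ∑ j, a j x * (Real.sqrt (u * w j) - u)
      = (∑ j, 2 * (a j x * Real.sqrt (u * w j))) - 2 * u * ∑ j, a j x := by
  rw [Finset.mul_sum, Finset.mul_sum, ← Finset.sum_sub_distrib]
  exact Finset.sum_congr rfl fun j _ => by ring

/-- **Closed-form solution of the HJB Hamiltonian minimization.**
For nonnegative propensity values `a_j(x)`, `u > 0`, and `u_j > 0`, the infimum of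
`H` over the admissible set `A_x` equals `2 ∑_j a_j(x)(√(u·u_j) − u)` and it is
attained at `δ̃_j = a_j(x)·√(u_j/u)`. -/
theorem hjb_hamiltonian_min
    {d J : ℕ} (a : Fin J → (Fin d → ℕ) → ℝ) (x : Fin d → ℕ)
    (ha : ∀ j, 0 ≤ a j x) (u : ℝ) (hu : 0 < u)
    (w : Fin J → ℝ) (hw : ∀ j, 0 < w j) :
    Adm a x (fun j => a j x * Real.sqrt (w j / u)) ∧
    Hfun a x u w (fun j => a j x * Real.sqrt (w j / u))
      = 2 * ∑ j, a j x * (Real.sqrt (u * w j) - u) ∧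
    IsLeast (Hfun a x u w '' {δ | Adm a x δ})
      (2 * ∑ j, a j x * (Real.sqrt (u * w j) - u)) := by
  have hadm : Adm a x (fun j => a j x * Real.sqrt (w j / u)) := by
    intro j
    constructor
    · intro h; simp [h]
    · intro h
      have hpos : 0 < a j x := lt_of_le_of_ne (ha j) (Ne.symm h)
      have : 0 < Real.sqrt (w j / u) := Real.sqrt_pos.2 (div_pos (hw j) hu)
      exact mul_pos hpos this
  have hval : Hfun a x u w (fun j => a j x * Real.sqrt (w j / u))
      = 2 * ∑ j, a j x * (Real.sqrt (u * w j) - u) := by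
    rw [Hfun_eq, target_eq]
    congr 1
    exact Finset.sum_congr rfl fun j _ => term_eq (a j x) u (w j) (ha j) hu (hw j)
  refine ⟨hadm, hval, ⟨⟨_, hadm, hval⟩, ?_⟩⟩
  rintro y ⟨δ, hδ, rfl⟩
  rw [Hfun_eq, target_eq]
  have : (∑ j, 2 * (a j x * Real.sqrt (u * w j)))
      ≤ ∑ j, (δ j * u + (a j x) ^ 2 / δ j * w j) :=
    Finset.sum_le_sum fun j _ => term_ge (a j x) u (w j) (δ j) (ha j) hu (hw j)
      (hδ j).1 (hδ j).2
  linarith
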